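/- The torsion subgroup of the string group L(p) has cardinality (∏_{i=1}^t p_i)/p, where p = lcm(p_1,...,p_t). -/

import Mathlib

open scoped BigOperators

def stringRelators {ι : Type} [DecidableEq ι] (p : ι → ℕ) : Set (ι → ℤ) :=
  { v | ∃ i j : ι, v = (p i : ℤ) • Pi.single i 1 - (p j : ℤ) • Pi.single j 1 }

abbrev StringGroup {ι : Type} [DecidableEq ι] (p : ι → ℕ) : Type :=
  (ι → ℤ) ⧸ AddSubgroup.closure (stringRelators p)

def xgen {ι : Type} [DecidableEq ι] (p : ι → ℕ) (i : ι) : StringGroup p :=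
  QuotientAddGroup.mk (Pi.single i 1)

def canon {ι : Type} [DecidableEq ι] (p : ι → ℕ) (i : ι) : StringGroup p :=
  (p i : ℤ) • xgen p i

/-!
Let `n` be the lcm of the `p i`. The weight `x i ↦ n / p i` is a homomorphism `L(p) → ℤ`, and
`n • x = weight x • p i • x i`, so the torsion subgroup is exactly the kernel of the weight.
The weight together with the residues `x i ↦ eᵢ ∈ ∏ ℤ/p i` separates the points of `L(p)`, so on
torsion the residue map is injective; its image is the kernel of
`b ↦ ∑ bᵢ (n / p i) : ∏ ℤ/p i → ℤ/n`. That map is onto because its image contains an element of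
order `p i` for every `i`, so the torsion subgroup has `(∏ p i) / n` elements.
-/

instance Finset.lcm_neZero {ι : Type*} {s : Finset ι} {f : ι → ℕ} [∀ i, NeZero (f i)] :
    NeZero (s.lcm f) :=
  ⟨Finset.lcm_ne_zero_iff.mpr fun i _ => NeZero.ne (f i)⟩

theorem Finset.mul_lcm_div_cancel {ι : Type*} {s : Finset ι} (f : ι → ℕ) {i : ι} (hi : i ∈ s) :
    f i * (s.lcm f / f i) = s.lcm f :=
  Nat.mul_div_cancel' (Finset.dvd_lcm hi)

namespace StringGroup

variable {ι : Type} [DecidableEq ι] (p : ι → ℕ)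

theorem canon_eq_canon (i j : ι) : canon p i = canon p j := by
  have hrel : (p i : ℤ) • Pi.single i 1 - (p j : ℤ) • Pi.single j 1 ∈
      AddSubgroup.closure (stringRelators p) :=
    AddSubgroup.subset_closure ⟨i, j, rfl⟩
  rw [← sub_eq_zero]
  simpa [canon, xgen] using (QuotientAddGroup.eq_zero_iff _).mpr hrel

variable [Fintype ι]

theorem mk_eq_sum_zsmul_xgen (v : ι → ℤ) :
    (v : StringGroup p) = ∑ i, v i • xgen p i := by
  conv_lhs => rw [← Finset.univ_sum_single v]
  rw [← QuotientAddGroup.mk'_apply, map_sum]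
  refine Finset.sum_congr rfl fun i _ => ?_
  rw [xgen, ← QuotientAddGroup.mk_zsmul, ← Pi.single_zsmul, smul_eq_mul, mul_one]
  rfl

theorem hom_ext {A : Type*} [AddCommGroup A] {f g : StringGroup p →+ A}
    (h : ∀ i, f (xgen p i) = g (xgen p i)) : f = g := by
  refine AddMonoidHom.ext fun x => ?_
  obtain ⟨v, rfl⟩ := QuotientAddGroup.mk_surjective x
  simp [mk_eq_sum_zsmul_xgen, h]

def lift {A : Type*} [AddCommGroup A] (a : ι → A) (ha : ∀ i j, p i • a i = p j • a j) :
    StringGroup p →+ A :=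
  QuotientAddGroup.lift _ (Fintype.linearCombination ℤ a).toAddMonoidHom <| by
    rw [AddSubgroup.closure_le]
    rintro _ ⟨i, j, rfl⟩
    simp only [SetLike.mem_coe, AddMonoidHom.mem_ker, map_sub, natCast_zsmul, map_nsmul,
      LinearMap.toAddMonoidHom_coe, Fintype.linearCombination_apply_single, one_smul, ha i j,
      sub_self]

@[simp]
theorem lift_xgen {A : Type*} [AddCommGroup A] (a : ι → A) (ha : ∀ i j, p i • a i = p j • a j)
    (i : ι) : lift p a ha (xgen p i) = a i := by
  simp [lift, xgen]

def weight : StringGroup p →+ ℤ :=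
  lift p (fun i => ((Finset.univ.lcm p / p i : ℕ) : ℤ)) fun i j => by
    simp only [nsmul_eq_mul, ← Nat.cast_mul, Finset.mul_lcm_div_cancel p (Finset.mem_univ _)]

@[simp]
theorem weight_xgen (i : ι) : weight p (xgen p i) = (Finset.univ.lcm p / p i : ℕ) :=
  lift_xgen ..

theorem weight_canon (i : ι) : weight p (canon p i) = Finset.univ.lcm p := by
  rw [canon, map_zsmul, weight_xgen, smul_eq_mul, ← Nat.cast_mul,
    Finset.mul_lcm_div_cancel p (Finset.mem_univ _)]

def residues : StringGroup p →+ ∀ i, ZMod (p i) :=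
  lift p (fun i => Pi.single i 1) fun i j => by
    simp only [← Pi.single_smul, nsmul_eq_mul, mul_one, ZMod.natCast_self, Pi.single_zero]

@[simp]
theorem residues_xgen (i : ι) : residues p (xgen p i) = Pi.single i 1 :=
  lift_xgen ..

theorem residues_canon (i : ι) : residues p (canon p i) = 0 := by
  rw [canon, map_zsmul, residues_xgen, natCast_zsmul, ← Pi.single_smul, nsmul_eq_mul, mul_one,
    ZMod.natCast_self, Pi.single_zero]

theorem residues_mk (v : ι → ℤ) : residues p v = fun i => (v i : ZMod (p i)) := by
  rw [mk_eq_sum_zsmul_xgen, map_sum]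
  conv_rhs => rw [← Finset.univ_sum_single fun i => (v i : ZMod (p i))]
  refine Finset.sum_congr rfl fun i _ => ?_
  rw [map_zsmul, residues_xgen, ← Pi.single_zsmul, zsmul_one]

theorem residues_surjective [∀ i, NeZero (p i)] : Function.Surjective (residues p) := by
  intro b
  refine ⟨∑ i, (b i).val • xgen p i, ?_⟩
  conv_rhs => rw [← Finset.univ_sum_single b]
  rw [map_sum]
  refine Finset.sum_congr rfl fun i _ => ?_
  rw [map_nsmul, residues_xgen, ← Pi.single_smul, nsmul_one, ZMod.natCast_zmod_val]

theorem lcm_nsmul_eq_weight_zsmul_canon (x : StringGroup p) (i₀ : ι) :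
    Finset.univ.lcm p • x = weight p x • canon p i₀ := by
  have key : (Finset.univ.lcm p • AddMonoidHom.id _ : StringGroup p →+ StringGroup p) =
      (zmultiplesHom _ (canon p i₀)).comp (weight p) := by
    refine hom_ext p fun i => ?_
    change Finset.univ.lcm p • xgen p i = weight p (xgen p i) • canon p i₀
    rw [weight_xgen, ← canon_eq_canon p i, canon, natCast_zsmul, natCast_zsmul, smul_smul,
      mul_comm, Finset.mul_lcm_div_cancel p (Finset.mem_univ _)]
  exact DFunLike.congr_fun key x

theorem eq_zero_of_weight_eq_zero_of_residues_eq_zero [Nonempty ι] [∀ i, NeZero (p i)]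
    {x : StringGroup p} (hw : weight p x = 0) (hr : residues p x = 0) : x = 0 := by
  obtain ⟨v, rfl⟩ := QuotientAddGroup.mk_surjective x
  have hdvd (i : ι) : (p i : ℤ) ∣ v i := by
    rw [← ZMod.intCast_zmod_eq_zero_iff_dvd, ← congr_fun (residues_mk p v) i, hr, Pi.zero_apply]
  choose m hm using hdvd
  obtain ⟨i₀⟩ := ‹Nonempty ι›
  have hx : (v : StringGroup p) = (∑ i, m i) • canon p i₀ := by
    rw [mk_eq_sum_zsmul_xgen, Finset.sum_smul (R := ℤ) (M := StringGroup p)]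
    refine Finset.sum_congr rfl fun i _ => ?_
    rw [hm i, mul_comm, mul_zsmul, ← canon_eq_canon p i]
    rfl
  have hm0 : ∑ i, m i = 0 := by
    rw [hx, map_zsmul, weight_canon, smul_eq_mul] at hw
    exact (mul_eq_zero.mp hw).resolve_right (by exact_mod_cast NeZero.ne _)
  rw [hx, hm0, zero_smul]

theorem mem_torsion_iff_weight_eq_zero [Nonempty ι] [∀ i, NeZero (p i)] (x : StringGroup p) :
    x ∈ AddCommGroup.torsion (StringGroup p) ↔ weight p x = 0 := by
  rw [AddCommGroup.mem_torsion, isOfFinAddOrder_iff_nsmul_eq_zero]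
  constructor
  · rintro ⟨m, hm, hmx⟩
    have := congrArg (weight p) hmx
    rw [map_nsmul, map_zero] at this
    exact (smul_eq_zero.mp this).resolve_left hm.ne'
  · intro hw
    obtain ⟨i₀⟩ := ‹Nonempty ι›
    exact ⟨_, Nat.pos_of_neZero _, by rw [lcm_nsmul_eq_weight_zsmul_canon p x i₀, hw, zero_smul]⟩

def residueWeight : (∀ i, ZMod (p i)) →+ ZMod (Finset.univ.lcm p) :=
  ∑ i, (ZMod.lift (p i) ⟨zmultiplesHom _ ((Finset.univ.lcm p / p i : ℕ) : ZMod _), by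
    rw [zmultiplesHom_apply, natCast_zsmul, nsmul_eq_mul, ← Nat.cast_mul,
      Finset.mul_lcm_div_cancel p (Finset.mem_univ i), ZMod.natCast_self]⟩).comp
    (Pi.evalAddMonoidHom _ i)

theorem residueWeight_single_one (i : ι) :
    residueWeight p (Pi.single i 1) = ((Finset.univ.lcm p / p i : ℕ) : ZMod _) := by
  rw [residueWeight, AddMonoidHom.finsetSum_apply, Finset.sum_eq_single i]
  · rw [AddMonoidHom.comp_apply, Pi.evalAddMonoidHom_apply, Pi.single_eq_same,
      ← Int.cast_one, ZMod.lift_coe, zmultiplesHom_apply, one_zsmul]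
  · intro j _ hj
    simp [Pi.single_eq_of_ne hj]
  · simp

theorem residueWeight_residues (x : StringGroup p) :
    residueWeight p (residues p x) = weight p x := by
  have key : (residueWeight p).comp (residues p) = (Int.castAddHom _).comp (weight p) :=
    hom_ext p fun i => by
      rw [AddMonoidHom.comp_apply, AddMonoidHom.comp_apply, residues_xgen,
        residueWeight_single_one, weight_xgen, Int.coe_castAddHom]
      exact (Int.cast_natCast _).symm
  exact DFunLike.congr_fun key x

theorem residueWeight_surjective [∀ i, NeZero (p i)] : Function.Surjective (residueWeight p) := by
  set n := Finset.univ.lcm p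
  rw [← AddMonoidHom.range_eq_top, ← AddSubgroup.card_eq_iff_eq_top, Nat.card_zmod]
  refine Nat.dvd_antisymm ((AddSubgroup.card_addSubgroup_dvd_card _).trans (Nat.card_zmod n).dvd)
    (Finset.lcm_dvd fun i _ => ?_)
  have hdvd : n / p i ∣ n := Nat.div_dvd_of_dvd (Finset.dvd_lcm (Finset.mem_univ i))
  have h := (residueWeight p).range.addOrderOf_dvd_natCard ⟨Pi.single i 1, rfl⟩
  rwa [residueWeight_single_one, ZMod.addOrderOf_coe _ (NeZero.ne n), Nat.gcd_eq_right hdvd,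
    Nat.div_div_self (Finset.dvd_lcm (Finset.mem_univ i)) (NeZero.ne n)] at h

noncomputable def torsionEquivKerResidueWeight [Nonempty ι] [∀ i, NeZero (p i)] :
    AddCommGroup.torsion (StringGroup p) ≃+ (residueWeight p).ker := by
  refine AddEquiv.ofBijective
    (((residues p).domRestrict (AddCommGroup.torsion _)).codRestrict _ fun x => ?_) ⟨?_, ?_⟩
  · rw [AddMonoidHom.mem_ker, AddMonoidHom.domRestrict_apply, residueWeight_residues,
      (mem_torsion_iff_weight_eq_zero p x).mp x.2, Int.cast_zero]
  · refine (injective_iff_map_eq_zero _).mpr fun x hx => Subtype.ext ?_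
    exact eq_zero_of_weight_eq_zero_of_residues_eq_zero p
      ((mem_torsion_iff_weight_eq_zero p x).mp x.2) (congrArg Subtype.val hx)
  · rintro ⟨b, hb⟩
    obtain ⟨x, rfl⟩ := residues_surjective p b
    rw [AddMonoidHom.mem_ker, residueWeight_residues, ZMod.intCast_zmod_eq_zero_iff_dvd] at hb
    obtain ⟨m, hm⟩ := hb
    obtain ⟨i₀⟩ := ‹Nonempty ι›
    have hy : x - m • canon p i₀ ∈ AddCommGroup.torsion (StringGroup p) := by
      rw [mem_torsion_iff_weight_eq_zero, map_sub, map_zsmul, weight_canon, hm, smul_eq_mul,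
        mul_comm, sub_self]
    refine ⟨⟨_, hy⟩, Subtype.ext ?_⟩
    simp [residues_canon]

theorem card_ker_residueWeight_mul_lcm [∀ i, NeZero (p i)] :
    Nat.card (residueWeight p).ker * Finset.univ.lcm p = ∏ i, p i := by
  calc Nat.card (residueWeight p).ker * Finset.univ.lcm p
      = Nat.card (residueWeight p).ker * (residueWeight p).ker.index := by
        rw [AddSubgroup.index_ker, AddMonoidHom.range_eq_top.mpr (residueWeight_surjective p),
          AddSubgroup.card_top, Nat.card_zmod]
    _ = ∏ i, p i := by rw [AddSubgroup.card_mul_index, Nat.card_pi]; simp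

end StringGroup

theorem stmt3 {t : ℕ} (p : Fin (t+1) → ℕ) (hp : ∀ i, 2 ≤ p i) :
    Nat.card (AddCommGroup.torsion (StringGroup p)) =
      (∏ i, p i) / (Finset.univ.lcm p) := by
  have (i : Fin (t + 1)) : NeZero (p i) := ⟨by have := hp i; omega⟩
  rw [Nat.card_congr (StringGroup.torsionEquivKerResidueWeight p).toEquiv,
    ← StringGroup.card_ker_residueWeight_mul_lcm p, Nat.mul_div_cancel _ (Nat.pos_of_neZero _)]
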